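/- arXiv:2305.09998 — 6 statements merged into one kernel-verified Lean document; each statement's English description precedes it below -/
import Mathlib

section
/- Let G = (V,E) be a loopless digraph with all outdegrees 1, v* a maximum-indegree vertex with indegree Δ, and π a uniformly random permutation of V. For every i ∈ {1,…,Δ} and j ∈ {0,…,i−1}, the conditional probability that some vertex v ≠ v* has at least i in-neighbors preceding it in π, given that exactly j in-neighbors of v* precede v*, is at least the same conditional probability given that exactly i in-neighbors of v* precede v*. -/
open scoped Classical

section Aux
variable {n : ℕ}

-- rank of the k-th element of a sorted finset
lemma rank_orderIso (s : Finset (Fin n)) {m : ℕ} (h : s.card = m) (k : Fin m) :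
    (s.filter (fun q => q < (s.orderIsoOfFin h k : Fin n))).card = (k : ℕ) := by
  have himg : s.filter (fun q => q < (s.orderIsoOfFin h k : Fin n))
      = (Finset.univ.filter (fun m' : Fin m => m' < k)).image
          (fun m' => (s.orderIsoOfFin h m' : Fin n)) := by
    ext q
    simp only [Finset.mem_filter, Finset.mem_image, Finset.mem_univ, true_and]
    constructor
    · rintro ⟨hq, hlt⟩
      refine ⟨(s.orderIsoOfFin h).symm ⟨q, hq⟩, ?_, by simp⟩
      rw [← (s.orderIsoOfFin h).lt_iff_lt]
      simp only [OrderIso.apply_symm_apply]; exact hlt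
    · rintro ⟨m', hm', rfl⟩
      exact ⟨(s.orderIsoOfFin h m').2, by exact_mod_cast (s.orderIsoOfFin h).lt_iff_lt.2 hm'⟩
  rw [himg, Finset.card_image_of_injective _ (fun x y hxy => by
    have := (s.orderIsoOfFin h).injective (Subtype.ext hxy); exact this)]
  have : Finset.univ.filter (fun m' : Fin m => m' < k) = Finset.Iio k := by
    ext x; simp
  rw [this, Fin.card_Iio]

lemma eq_orderIso_of_rank (s : Finset (Fin n)) {m : ℕ} (h : s.card = m) {x : Fin n}
    (hx : x ∈ s) {k : Fin m} (hk : (s.filter (fun q => q < x)).card = (k : ℕ)) :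
    x = (s.orderIsoOfFin h k : Fin n) := by
  obtain ⟨m', hm'⟩ : ∃ m', s.orderIsoOfFin h m' = ⟨x, hx⟩ := (s.orderIsoOfFin h).surjective ⟨x, hx⟩
  have hxm : x = (s.orderIsoOfFin h m' : Fin n) := by rw [hm']
  have := rank_orderIso s h m'
  rw [← hxm] at this
  rw [this] at hk
  have : m' = k := Fin.ext hk
  rw [hxm, this]


section Aux
variable {n : ℕ}

noncomputable def SS (succ : Fin n → Fin n) (vstar : Fin n) : Finset (Fin n) :=
  insert vstar (Finset.univ.filter (fun u => succ u = vstar))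

noncomputable def PP (succ : Fin n → Fin n) (vstar : Fin n) (π : Equiv.Perm (Fin n)) :
    Finset (Fin n) := (SS succ vstar).image π

lemma card_PP (succ : Fin n → Fin n) (vstar : Fin n) (hs : succ vstar ≠ vstar) {Δ : ℕ}
    (hΔ : (Finset.univ.filter (fun u => succ u = vstar)).card = Δ) (π : Equiv.Perm (Fin n)) :
    (PP succ vstar π).card = Δ + 1 := by
  rw [PP, Finset.card_image_of_injective _ π.injective, SS,
    Finset.card_insert_of_notMem (by simp [hs]), hΔ]

lemma pivst_mem_PP (succ : Fin n → Fin n) (vstar : Fin n) (π : Equiv.Perm (Fin n)) :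
    π vstar ∈ PP succ vstar π :=
  Finset.mem_image_of_mem _ (Finset.mem_insert_self _ _)

lemma cnt_eq_rank (succ : Fin n → Fin n) (vstar : Fin n) (π : Equiv.Perm (Fin n)) :
    (Finset.univ.filter (fun u => succ u = vstar ∧ π u < π vstar)).card
      = ((PP succ vstar π).filter (fun q => q < π vstar)).card := by
  have himg : (PP succ vstar π).filter (fun q => q < π vstar)
      = (Finset.univ.filter (fun u => succ u = vstar ∧ π u < π vstar)).image π := by
    ext q
    simp only [PP, SS, Finset.mem_filter, Finset.mem_image, Finset.mem_insert,
      Finset.mem_univ, true_and]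
    constructor
    · rintro ⟨⟨u, hu, rfl⟩, hlt⟩
      rcases hu with rfl | hu
      · exact absurd hlt (lt_irrefl _)
      · exact ⟨u, ⟨hu, hlt⟩, rfl⟩
    · rintro ⟨u, ⟨hu, hlt⟩, rfl⟩
      exact ⟨⟨u, Or.inr hu, rfl⟩, hlt⟩
  rw [himg, Finset.card_image_of_injective _ π.injective]

lemma PP_swap (succ : Fin n → Fin n) (vstar : Fin n) (π : Equiv.Perm (Fin n)) {a b : Fin n}
    (ha : a ∈ PP succ vstar π) (hb : b ∈ PP succ vstar π) :
    PP succ vstar (Equiv.swap a b * π) = PP succ vstar π := by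
  have h1 : PP succ vstar (Equiv.swap a b * π) = (PP succ vstar π).image (Equiv.swap a b) := by
    rw [PP, PP, Finset.image_image]
    rfl
  rw [h1]
  apply Finset.eq_of_subset_of_card_le
  · intro q hq
    rcases Finset.mem_image.1 hq with ⟨x, hx, rfl⟩
    rcases eq_or_ne x a with rfl | hxa
    · rwa [Equiv.swap_apply_left]
    rcases eq_or_ne x b with rfl | hxb
    · rwa [Equiv.swap_apply_right]
    · rwa [Equiv.swap_apply_of_ne_of_ne hxa hxb]
  · rw [Finset.card_image_of_injective _ (Equiv.swap a b).injective]

noncomputable def pos (succ : Fin n → Fin n) (vstar : Fin n) {Δ : ℕ}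
    (π : Equiv.Perm (Fin n)) (h : (PP succ vstar π).card = Δ + 1) (k' : Fin (Δ + 1)) : Fin n :=
  ((PP succ vstar π).orderIsoOfFin h k' : Fin n)

lemma pos_mem (succ : Fin n → Fin n) (vstar : Fin n) {Δ : ℕ}
    (π : Equiv.Perm (Fin n)) (h : (PP succ vstar π).card = Δ + 1) (k' : Fin (Δ + 1)) :
    pos succ vstar π h k' ∈ PP succ vstar π :=
  ((PP succ vstar π).orderIsoOfFin h k').2

lemma pos_congr {s t : Finset (Fin n)} (hst : s = t) {m : ℕ} (h1 : s.card = m)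
    (h2 : t.card = m) (k' : Fin m) :
    (s.orderIsoOfFin h1 k' : Fin n) = (t.orderIsoOfFin h2 k' : Fin n) := by
  subst hst; rfl

lemma pos_lt (succ : Fin n → Fin n) (vstar : Fin n) {Δ : ℕ}
    (π : Equiv.Perm (Fin n)) (h : (PP succ vstar π).card = Δ + 1) {k1 k2 : Fin (Δ + 1)}
    (hk : k1 < k2) : pos succ vstar π h k1 < pos succ vstar π h k2 := by
  have := ((PP succ vstar π).orderIsoOfFin h).lt_iff_lt.2 hk
  exact_mod_cast this


lemma step_main (succ : Fin n → Fin n) (vstar : Fin n) (hs : ∀ v, succ v ≠ v) {Δ : ℕ}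
    (hΔ : (Finset.univ.filter (fun u => succ u = vstar)).card = Δ) (k i : ℕ) (hk : k + 1 ≤ Δ) :
    ((Finset.univ.filter (fun π : Equiv.Perm (Fin n) =>
        (Finset.univ.filter (fun u => succ u = vstar ∧ π u < π vstar)).card = k + 1)).card
      = (Finset.univ.filter (fun π : Equiv.Perm (Fin n) =>
        (Finset.univ.filter (fun u => succ u = vstar ∧ π u < π vstar)).card = k)).card)
    ∧ ((Finset.univ.filter (fun π : Equiv.Perm (Fin n) =>
        (Finset.univ.filter (fun u => succ u = vstar ∧ π u < π vstar)).card = k + 1 ∧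
        ∃ v : Fin n, v ≠ vstar ∧
          i ≤ (Finset.univ.filter (fun u => succ u = v ∧ π u < π v)).card)).card
      ≤ (Finset.univ.filter (fun π : Equiv.Perm (Fin n) =>
        (Finset.univ.filter (fun u => succ u = vstar ∧ π u < π vstar)).card = k ∧
        ∃ v : Fin n, v ≠ vstar ∧
          i ≤ (Finset.univ.filter (fun u => succ u = v ∧ π u < π v)).card)).card) := by
  have hvs : succ vstar ≠ vstar := hs vstar
  have hcard : ∀ π : Equiv.Perm (Fin n), (PP succ vstar π).card = Δ + 1 :=
    card_PP succ vstar hvs hΔ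
  have hka : k < Δ + 1 := by omega
  have hkb : k + 1 < Δ + 1 := by omega
  set Φ : Equiv.Perm (Fin n) → Equiv.Perm (Fin n) := fun π =>
    Equiv.swap (pos succ vstar π (hcard π) ⟨k, hka⟩) (pos succ vstar π (hcard π) ⟨k+1, hkb⟩) * π
    with hΦdef
  have hPP : ∀ π, PP succ vstar (Φ π) = PP succ vstar π := by
    intro π
    exact PP_swap succ vstar π (pos_mem succ vstar π (hcard π) _) (pos_mem succ vstar π (hcard π) _)
  have hposΦ : ∀ (π) (k' : Fin (Δ+1)), pos succ vstar (Φ π) (hcard (Φ π)) k'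
      = pos succ vstar π (hcard π) k' := by
    intro π k'
    exact pos_congr (hPP π) _ _ k'
  have hinv : ∀ π, Φ (Φ π) = π := by
    intro π
    rw [hΦdef]
    simp only [hΦdef] at hposΦ
    simp only [hposΦ]
    rw [← mul_assoc, Equiv.swap_mul_self, one_mul]
  have hab : ∀ π, pos succ vstar π (hcard π) ⟨k, hka⟩ < pos succ vstar π (hcard π) ⟨k+1, hkb⟩ := by
    intro π
    exact pos_lt succ vstar π (hcard π) (by simp [Fin.lt_def])
  have hrank : ∀ (π : Equiv.Perm (Fin n)) (m : ℕ) (hm : m < Δ+1),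
      ((Finset.univ.filter (fun u => succ u = vstar ∧ π u < π vstar)).card = m
        ↔ π vstar = pos succ vstar π (hcard π) ⟨m, hm⟩) := by
    intro π m hm
    constructor
    · intro h
      rw [cnt_eq_rank] at h
      exact eq_orderIso_of_rank _ (hcard π) (pivst_mem_PP succ vstar π) h
    · intro h
      rw [cnt_eq_rank, h]
      exact rank_orderIso _ (hcard π) ⟨m, hm⟩
  -- action of Φ on the rank of vstar
  have hmapdown : ∀ π, (Finset.univ.filter (fun u => succ u = vstar ∧ π u < π vstar)).card = k + 1 →
      (Finset.univ.filter (fun u => succ u = vstar ∧ (Φ π) u < (Φ π) vstar)).card = k := by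
    intro π h
    have hb : π vstar = pos succ vstar π (hcard π) ⟨k+1, hkb⟩ := (hrank π (k+1) hkb).1 h
    have : (Φ π) vstar = pos succ vstar π (hcard π) ⟨k, hka⟩ := by
      rw [hΦdef]
      simp only [Equiv.Perm.mul_apply]
      rw [hb, Equiv.swap_apply_right]
    rw [hrank (Φ π) k hka, hposΦ]
    exact this
  have hmapup : ∀ π, (Finset.univ.filter (fun u => succ u = vstar ∧ π u < π vstar)).card = k →
      (Finset.univ.filter (fun u => succ u = vstar ∧ (Φ π) u < (Φ π) vstar)).card = k + 1 := by
    intro π h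
    have ha : π vstar = pos succ vstar π (hcard π) ⟨k, hka⟩ := (hrank π k hka).1 h
    have : (Φ π) vstar = pos succ vstar π (hcard π) ⟨k+1, hkb⟩ := by
      rw [hΦdef]
      simp only [Equiv.Perm.mul_apply]
      rw [ha, Equiv.swap_apply_left]
    rw [hrank (Φ π) (k+1) hkb, hposΦ]
    exact this
  -- E preservation when going down
  have hmapE : ∀ π, (Finset.univ.filter (fun u => succ u = vstar ∧ π u < π vstar)).card = k + 1 →
      ∀ v : Fin n, v ≠ vstar →
      (Finset.univ.filter (fun u => succ u = v ∧ π u < π v)).card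
        ≤ (Finset.univ.filter (fun u => succ u = v ∧ (Φ π) u < (Φ π) v)).card := by
    intro π h v hv
    set a := pos succ vstar π (hcard π) ⟨k, hka⟩ with hadef
    set b := pos succ vstar π (hcard π) ⟨k+1, hkb⟩ with hbdef
    have hb : π vstar = b := (hrank π (k+1) hkb).1 h
    have haltb : a < b := hab π
    -- the vertex sitting at position a is in SS
    have hamem : a ∈ PP succ vstar π := pos_mem succ vstar π (hcard π) _
    obtain ⟨w, hwS, hwa⟩ := Finset.mem_image.1 hamem
    apply Finset.card_le_card
    intro u hu
    rw [Finset.mem_filter] at hu ⊢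
    obtain ⟨_, hsucc, hlt⟩ := hu
    refine ⟨Finset.mem_univ u, hsucc, ?_⟩
    have hΦap : ∀ x, (Φ π) x = Equiv.swap a b (π x) := by
      intro x; rw [hΦdef]; rfl
    have hπv_ne_b : π v ≠ b := by
      rw [← hb]; exact fun hc => hv (π.injective hc)
    have hΦv_ge : π v ≤ (Φ π) v := by
      rw [hΦap]
      rcases eq_or_ne (π v) a with hva | hva
      · have hsw : (Equiv.swap a b) (π v) = b := by rw [hva, Equiv.swap_apply_left]
        rw [hsw]
        exact le_trans hva.le (le_of_lt haltb)
      · rw [Equiv.swap_apply_of_ne_of_ne hva hπv_ne_b]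
    rcases eq_or_ne u vstar with heq | huv
    · -- u = vstar : position b ↦ a
      rw [hΦap, heq, hb, Equiv.swap_apply_right]
      calc a < b := haltb
        _ = π vstar := hb.symm
        _ < π v := heq ▸ hlt
        _ ≤ (Φ π) v := hΦv_ge
    · have hπu_ne_b : π u ≠ b := by rw [← hb]; exact fun hc => huv (π.injective hc)
      have hπu_ne_a : π u ≠ a := by
        intro hc
        have : u = w := π.injective (hc.trans hwa.symm)
        subst this
        rcases Finset.mem_insert.1 hwS with rfl | hw
        · exact huv rfl
        · rw [Finset.mem_filter] at hw
          exact hv (hsucc ▸ hw.2)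
      rw [hΦap, Equiv.swap_apply_of_ne_of_ne hπu_ne_a hπu_ne_b]
      exact lt_of_lt_of_le hlt hΦv_ge
  constructor
  · apply Finset.card_bij' (fun π _ => Φ π) (fun π _ => Φ π)
    · intro π hπ
      rw [Finset.mem_filter] at hπ ⊢
      exact ⟨Finset.mem_univ _, hmapdown π hπ.2⟩
    · intro π hπ
      rw [Finset.mem_filter] at hπ ⊢
      exact ⟨Finset.mem_univ _, hmapup π hπ.2⟩
    · intro π _; exact hinv π
    · intro π _; exact hinv π
  · apply Finset.card_le_card_of_injOn Φ
    · intro π hπ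
      rw [Finset.mem_coe, Finset.mem_filter] at hπ
      obtain ⟨-, hA, v, hv, hE⟩ := hπ
      rw [Finset.mem_coe, Finset.mem_filter]
      exact ⟨Finset.mem_univ _, hmapdown π hA, v, hv, le_trans hE (hmapE π hA v hv)⟩
    · intro π1 _ π2 _ hEq
      have := congrArg Φ hEq
      rwa [hinv, hinv] at this

lemma chain_main (succ : Fin n → Fin n) (vstar : Fin n) (hs : ∀ v, succ v ≠ v) {Δ : ℕ}
    (hΔ : (Finset.univ.filter (fun u => succ u = vstar)).card = Δ) (i : ℕ) :
    ∀ d j' : ℕ, j' + d ≤ Δ →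
    ((Finset.univ.filter (fun π : Equiv.Perm (Fin n) =>
        (Finset.univ.filter (fun u => succ u = vstar ∧ π u < π vstar)).card = j' + d)).card
      = (Finset.univ.filter (fun π : Equiv.Perm (Fin n) =>
        (Finset.univ.filter (fun u => succ u = vstar ∧ π u < π vstar)).card = j')).card)
    ∧ ((Finset.univ.filter (fun π : Equiv.Perm (Fin n) =>
        (Finset.univ.filter (fun u => succ u = vstar ∧ π u < π vstar)).card = j' + d ∧
        ∃ v : Fin n, v ≠ vstar ∧
          i ≤ (Finset.univ.filter (fun u => succ u = v ∧ π u < π v)).card)).card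
      ≤ (Finset.univ.filter (fun π : Equiv.Perm (Fin n) =>
        (Finset.univ.filter (fun u => succ u = vstar ∧ π u < π vstar)).card = j' ∧
        ∃ v : Fin n, v ≠ vstar ∧
          i ≤ (Finset.univ.filter (fun u => succ u = v ∧ π u < π v)).card)).card) := by
  intro d
  induction d with
  | zero => intro j' _; exact ⟨rfl, le_refl _⟩
  | succ d ih =>
    intro j' hle
    have h1 := ih j' (by omega)
    have h2 := step_main succ vstar hs hΔ (j' + d) i (by omega)
    have hjd : j' + (d + 1) = (j' + d) + 1 := by omega
    rw [hjd]
    exact ⟨h2.1.trans h1.1, le_trans h2.2 h1.2⟩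

end Aux

theorem stmt5 (n : ℕ) (succ : Fin n → Fin n) (hs : ∀ v, succ v ≠ v)
    (vstar : Fin n) (Δ : ℕ)
    (hΔ : (Finset.univ.filter (fun u => succ u = vstar)).card = Δ)
    (hmax : ∀ v : Fin n, (Finset.univ.filter (fun u => succ u = v)).card ≤ Δ)
    (i j : ℕ) (hi : 1 ≤ i) (hiΔ : i ≤ Δ) (hj : j < i) :
    (((Finset.univ.filter (fun π : Equiv.Perm (Fin n) =>
        (Finset.univ.filter (fun u => succ u = vstar ∧ π u < π vstar)).card = j ∧
        ∃ v : Fin n, v ≠ vstar ∧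
          i ≤ (Finset.univ.filter (fun u => succ u = v ∧ π u < π v)).card)).card : ℚ)
      / ((Finset.univ.filter (fun π : Equiv.Perm (Fin n) =>
        (Finset.univ.filter (fun u => succ u = vstar ∧ π u < π vstar)).card = j)).card : ℚ))
    ≥
    (((Finset.univ.filter (fun π : Equiv.Perm (Fin n) =>
        (Finset.univ.filter (fun u => succ u = vstar ∧ π u < π vstar)).card = i ∧
        ∃ v : Fin n, v ≠ vstar ∧
          i ≤ (Finset.univ.filter (fun u => succ u = v ∧ π u < π v)).card)).card : ℚ)
      / ((Finset.univ.filter (fun π : Equiv.Perm (Fin n) =>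
        (Finset.univ.filter (fun u => succ u = vstar ∧ π u < π vstar)).card = i)).card : ℚ)) := by
  have key := chain_main succ vstar hs hΔ i (i - j) j (by omega)
  have hij : j + (i - j) = i := by omega
  rw [hij] at key
  obtain ⟨hD, hN⟩ := key
  rw [hD]
  rcases Nat.eq_zero_or_pos ((Finset.univ.filter (fun π : Equiv.Perm (Fin n) =>
      (Finset.univ.filter (fun u => succ u = vstar ∧ π u < π vstar)).card = j)).card)
    with h0 | hpos
  · rw [h0]; simp
  · rw [ge_iff_le]
    exact div_le_div_of_nonneg_right (by exact_mod_cast hN) (Nat.cast_nonneg _)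
end Aux
end

section
/- Let G = (V,E) be a loopless digraph with all outdegrees 1, fix i ∈ {1,…,Δ} and j ∈ {0,…,i−1}, and let v* have indegree Δ. Define P_{ij}(n) as the set of permutations π of V such that exactly j in-neighbors of v* precede v* and some v ≠ v* has at least i in-neighbors preceding it; define P_i(n) analogously with exactly i in-neighbors of v* preceding v*. Then there is an injection from P_i(n) into P_{ij}(n); in particular |P_{ij}(n)| ≥ |P_i(n)|. -/
open scoped Classical

lemma idx_card {α} [LinearOrder α] {s : Finset α} {n k : ℕ} (h : s.card = n) (hk : k < n) :
    (s.filter (· < s.orderEmbOfFin h ⟨k, hk⟩)).card = k := by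
  have hrange : ∀ x, x ∈ s ↔ ∃ m : Fin n, s.orderEmbOfFin h m = x := by
    intro x
    constructor
    · intro hx
      have h2 : x ∈ Set.range (s.orderEmbOfFin h) := by
        rw [Finset.range_orderEmbOfFin s h]; exact hx
      exact h2
    · rintro ⟨m, rfl⟩; exact Finset.orderEmbOfFin_mem s h m
  have himg : s.filter (· < s.orderEmbOfFin h ⟨k, hk⟩) =
      (Finset.univ.filter (fun m : Fin n => m < ⟨k, hk⟩)).image (s.orderEmbOfFin h) := by
    ext x
    simp only [Finset.mem_filter, Finset.mem_image, Finset.mem_univ, true_and]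
    constructor
    · rintro ⟨hx, hlt⟩
      obtain ⟨m, rfl⟩ := (hrange x).1 hx
      exact ⟨m, by simpa using hlt, rfl⟩
    · rintro ⟨m, hm, rfl⟩
      exact ⟨Finset.orderEmbOfFin_mem s h m, by simpa using hm⟩
  rw [himg, Finset.card_image_of_injective _ (s.orderEmbOfFin h).injective]
  have : Finset.filter (fun m : Fin n => m < ⟨k, hk⟩) Finset.univ = Finset.Iio ⟨k, hk⟩ := by
    ext m; simp
  rw [this, Fin.card_Iio]

lemma filter_lt_strict {α} [LinearOrder α] {s : Finset α} {x y : α} (hx : x ∈ s) (hxy : x < y) :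
    (s.filter (· < x)).card < (s.filter (· < y)).card := by
  apply Finset.card_lt_card
  constructor
  · intro z hz
    simp only [Finset.mem_filter] at hz ⊢
    exact ⟨hz.1, lt_trans hz.2 hxy⟩
  · intro hsub
    have hxmem : x ∈ s.filter (· < y) := Finset.mem_filter.2 ⟨hx, hxy⟩
    have := hsub hxmem
    simp at this

lemma idx_unique {α} [LinearOrder α] {s : Finset α} {n k : ℕ} (h : s.card = n) (hk : k < n)
    {x : α} (hx : x ∈ s) (hc : (s.filter (· < x)).card = k) :
    x = s.orderEmbOfFin h ⟨k, hk⟩ := by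
  set y := s.orderEmbOfFin h ⟨k, hk⟩ with hy
  have hyc : (s.filter (· < y)).card = k := idx_card h hk
  have hys : y ∈ s := Finset.orderEmbOfFin_mem s h _
  rcases lt_trichotomy x y with hlt | heq | hgt
  · have := filter_lt_strict hx hlt; omega
  · exact heq
  · have := filter_lt_strict hys hgt; omega

lemma swap_image {α} [DecidableEq α] {A : Finset α} {p q : α} (hp : p ∈ A) (hq : q ∈ A) :
    A.image (Equiv.swap p q) = A := by
  have hsub : A.image (Equiv.swap p q) ⊆ A := by
    intro x hx
    obtain ⟨a, ha, rfl⟩ := Finset.mem_image.1 hx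
    rcases eq_or_ne a p with rfl | hap
    · rwa [Equiv.swap_apply_left]
    rcases eq_or_ne a q with rfl | haq
    · rwa [Equiv.swap_apply_right]
    · rwa [Equiv.swap_apply_of_ne_of_ne hap haq]
  exact Finset.eq_of_subset_of_card_le hsub
    (by rw [Finset.card_image_of_injective _ (Equiv.swap p q).injective])

theorem stmt6 (n : ℕ) (succ : Fin n → Fin n) (hs : ∀ v, succ v ≠ v)
    (vstar : Fin n) (Δ : ℕ)
    (hΔ : (Finset.univ.filter (fun u => succ u = vstar)).card = Δ)
    (i j : ℕ) (hi : 1 ≤ i) (hiΔ : i ≤ Δ) (hj : j < i) :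
    let Pij : Finset (Equiv.Perm (Fin n)) := Finset.univ.filter (fun π =>
        (Finset.univ.filter (fun u => succ u = vstar ∧ π u < π vstar)).card = j ∧
        ∃ v : Fin n, v ≠ vstar ∧
          i ≤ (Finset.univ.filter (fun u => succ u = v ∧ π u < π v)).card)
    let Pi : Finset (Equiv.Perm (Fin n)) := Finset.univ.filter (fun π =>
        (Finset.univ.filter (fun u => succ u = vstar ∧ π u < π vstar)).card = i ∧
        ∃ v : Fin n, v ≠ vstar ∧
          i ≤ (Finset.univ.filter (fun u => succ u = v ∧ π u < π v)).card)
    (∃ g : {π // π ∈ Pi} → {π // π ∈ Pij}, Function.Injective g) ∧ Pi.card ≤ Pij.card := by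
  intro Pij Pi
  -- the set S = {v*} ∪ N⁻(v*)
  set N : Finset (Fin n) := Finset.univ.filter (fun u => succ u = vstar) with hN
  set S : Finset (Fin n) := insert vstar N with hS
  have hvN : vstar ∉ N := by simp [hN, hs vstar]
  have hcardS : S.card = Δ + 1 := by rw [hS, Finset.card_insert_of_notMem hvN, hΔ]
  have cardSρ : ∀ ρ : Equiv.Perm (Fin n), (S.image ρ).card = Δ + 1 := fun ρ => by
    rw [Finset.card_image_of_injective _ ρ.injective, hcardS]
  have hiΔ1 : i < Δ + 1 := by omega
  -- the recovery map
  set R : Equiv.Perm (Fin n) → Equiv.Perm (Fin n) := fun ρ =>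
    ρ.trans (Equiv.swap ((S.image ρ).orderEmbOfFin (cardSρ ρ) ⟨i, hiΔ1⟩) (ρ vstar)) with hR
  have main : ∀ π : Equiv.Perm (Fin n), π ∈ Pi → ∃ π', π' ∈ Pij ∧ R π' = π := by
    intro π hπ
    simp only [Pi, Finset.mem_filter, Finset.mem_univ, true_and] at hπ
    obtain ⟨hcnt, v, hv, hvc⟩ := hπ
    set T : Finset (Fin n) := Finset.univ.filter (fun u => succ u = vstar ∧ π u < π vstar)
      with hT
    have hTc : T.card = i := hcnt
    set P : Finset (Fin n) := T.image π with hPdef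
    have hP : P.card = i := by rw [hPdef, Finset.card_image_of_injective _ π.injective, hTc]
    set q : Fin n := P.orderEmbOfFin hP ⟨j, hj⟩ with hq
    have hqP : q ∈ P := Finset.orderEmbOfFin_mem P hP _
    obtain ⟨b, hbT, hbq⟩ := Finset.mem_image.1 hqP
    have hbprop : succ b = vstar ∧ π b < π vstar := (Finset.mem_filter.1 hbT).2
    set p : Fin n := π vstar with hp
    have hqp : q < p := hbq ▸ hbprop.2
    have hbv : b ≠ vstar := fun h => hs vstar (h ▸ hbprop.1)
    set σ : Equiv.Perm (Fin n) := Equiv.swap p q with hσ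
    set π' : Equiv.Perm (Fin n) := π.trans σ with hπ'
    have hπ'v : π' vstar = q := by
      simp only [hπ', Equiv.trans_apply, ← hp, hσ, Equiv.swap_apply_left]
    have hπ'b : π' b = p := by
      simp only [hπ', Equiv.trans_apply, hbq, hσ, Equiv.swap_apply_right]
    have hother : ∀ x, x ≠ vstar → x ≠ b → π' x = π x := by
      intro x hxv hxb
      have h1 : π x ≠ p := fun h => hxv (π.injective h)
      have h2 : π x ≠ q := fun h => hxb (π.injective (h.trans hbq.symm))
      simp only [hπ', Equiv.trans_apply, hσ, Equiv.swap_apply_of_ne_of_ne h1 h2]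
    -- monotonicity for vertices other than vstar
    have mono : ∀ w, w ≠ vstar → ∀ u, succ u = w → π u < π w → π' u < π' w := by
      intro w hw u hu hlt
      have hub : u ≠ b := fun h => hw (by rw [← hu, h, hbprop.1])
      rcases eq_or_ne u vstar with rfl | huv
      · rcases eq_or_ne w b with rfl | hwb
        · rw [hπ'v, hπ'b]; exact hqp
        · rw [hπ'v, hother w hw hwb]; exact lt_trans hqp hlt
      · rw [hother u huv hub]
        rcases eq_or_ne w b with rfl | hwb
        · rw [hπ'b]; exact lt_trans (hbq ▸ hlt) hqp
        · rw [hother w hw hwb]; exact hlt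
    -- the count for vstar under π' is j
    have hA : Finset.univ.filter (fun u => succ u = vstar ∧ π' u < π' vstar)
        = T.filter (fun u => π u < q) := by
      ext u
      simp only [Finset.mem_filter, Finset.mem_univ, true_and, hT]
      constructor
      · rintro ⟨h1, h2⟩
        have huv : u ≠ vstar := fun e => hs vstar (e ▸ h1)
        rcases eq_or_ne u b with rfl | hub
        · rw [hπ'b, hπ'v] at h2; exact absurd h2 (not_lt.2 (le_of_lt hqp))
        · rw [hother u huv hub, hπ'v] at h2
          exact ⟨⟨h1, lt_trans h2 hqp⟩, h2⟩
      · rintro ⟨⟨h1, h2⟩, h3⟩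
        have huv : u ≠ vstar := fun e => hs vstar (e ▸ h1)
        have hub : u ≠ b := fun e => absurd (e ▸ h3) (by rw [hbq]; exact lt_irrefl q)
        rw [hother u huv hub, hπ'v]
        exact ⟨h1, h3⟩
    have hcardj : (T.filter (fun u => π u < q)).card = j := by
      have himg : (T.filter (fun u => π u < q)).image π = P.filter (· < q) := by
        ext x
        simp only [Finset.mem_image, Finset.mem_filter, hPdef]
        constructor
        · rintro ⟨u, hu, rfl⟩
          exact ⟨⟨u, hu.1, rfl⟩, hu.2⟩
        · rintro ⟨⟨u, hu, rfl⟩, hx⟩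
          exact ⟨u, ⟨hu, hx⟩, rfl⟩
      have := idx_card hP hj
      rw [← hq] at this
      rw [← this, ← himg, Finset.card_image_of_injective _ π.injective]
    have hcount : (Finset.univ.filter (fun u => succ u = vstar ∧ π' u < π' vstar)).card = j := by
      rw [hA, hcardj]
    -- witness survives
    have hwit : i ≤ (Finset.univ.filter (fun u => succ u = v ∧ π' u < π' v)).card := by
      refine le_trans hvc (Finset.card_le_card ?_)
      intro u hu
      simp only [Finset.mem_filter, Finset.mem_univ, true_and] at hu ⊢
      exact ⟨hu.1, mono v hv u hu.1 hu.2⟩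
    have hπ'mem : π' ∈ Pij := by
      simp only [Pij, Finset.mem_filter, Finset.mem_univ, true_and]
      exact ⟨hcount, v, hv, hwit⟩
    refine ⟨π', hπ'mem, ?_⟩
    -- recovery
    have hbS : b ∈ S := by
      rw [hS]
      exact Finset.mem_insert_of_mem (by simp [hN, hbprop.1])
    have hvS : vstar ∈ S := Finset.mem_insert_self _ _
    have hpimg : p ∈ S.image π := Finset.mem_image.2 ⟨vstar, hvS, rfl⟩
    have hqimg : q ∈ S.image π := Finset.mem_image.2 ⟨b, hbS, hbq⟩
    have step1 : S.image π' = S.image π := by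
      have h1 : S.image π' = (S.image π).image σ := by
        rw [Finset.image_image]; rfl
      rw [h1, hσ, swap_image hpimg hqimg]
    have step2 : (S.image π).filter (· < p) = P := by
      ext x
      simp only [Finset.mem_filter, Finset.mem_image, hPdef, hT, Finset.mem_filter,
        Finset.mem_univ, true_and]
      constructor
      · rintro ⟨⟨u, hu, rfl⟩, hx⟩
        have huv : u ≠ vstar := fun e => absurd (e ▸ hx) (by rw [hp]; exact lt_irrefl _)
        have huN : succ u = vstar := by
          rw [hS] at hu
          rcases Finset.mem_insert.1 hu with rfl | h
          · exact absurd rfl huv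
          · exact (Finset.mem_filter.1 h).2
        exact ⟨u, ⟨huN, hx⟩, rfl⟩
      · rintro ⟨u, ⟨hu1, hu2⟩, rfl⟩
        exact ⟨⟨u, by rw [hS]; exact Finset.mem_insert_of_mem (by simp [hN, hu1]), rfl⟩, hu2⟩
    have hpmem' : p ∈ S.image π' := by rw [step1]; exact hpimg
    have hpc : ((S.image π').filter (· < p)).card = i := by
      rw [step1, step2, hP]
    have hpeq : p = (S.image π').orderEmbOfFin (cardSρ π') ⟨i, hiΔ1⟩ :=
      idx_unique (cardSρ π') hiΔ1 hpmem' hpc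
    rw [hR]
    simp only [← hpeq, hπ'v]
    rw [hπ', Equiv.trans_assoc, hσ, Equiv.swap_swap, Equiv.trans_refl]
  -- build the injection
  have hg : ∃ g : {π // π ∈ Pi} → {π // π ∈ Pij}, Function.Injective g := by
    refine ⟨fun x => ⟨Classical.choose (main x.1 x.2), (Classical.choose_spec (main x.1 x.2)).1⟩, ?_⟩
    intro a b hab
    have ha := (Classical.choose_spec (main a.1 a.2)).2
    have hb := (Classical.choose_spec (main b.1 b.2)).2
    have : Classical.choose (main a.1 a.2) = Classical.choose (main b.1 b.2) :=
      congrArg Subtype.val hab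
    apply Subtype.ext
    rw [← ha, ← hb, this]
  refine ⟨hg, ?_⟩
  obtain ⟨g, hginj⟩ := hg
  have := Fintype.card_le_of_injective g hginj
  simpa [Fintype.card_coe] using this
end

section
/- Let G be a loopless digraph on n vertices with all outdegrees 1, and suppose v₁*, v₂* are two distinct vertices, neither of which is an in-neighbor of the other, each with indegree 2 (and Δ(G) = 2). Under a uniformly random permutation π, the events [δ⁻_{π<v₁*}(v₁*) ≤ 1] and [δ⁻_{π<v₂*}(v₂*) ≤ 1] are independent, each having probability 2/3, so the probability both hold is 4/9. -/
open scoped Classical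
set_option maxHeartbeats 2000000
set_option maxRecDepth 8000

lemma pow_fix {α : Type*} (σ : Equiv.Perm α) {x : α} (h : σ x = x) (k : ℕ) : (σ ^ k) x = x := by
  induction k with
  | zero => rfl
  | succ k ih => rw [pow_succ, Equiv.Perm.mul_apply, h, ih]

lemma cnt {G ι : Type*} [Group G] [Fintype G] [DecidableEq G] [Fintype ι] [DecidableEq ι]
    (g : ι → G) (p : G → Prop) [DecidablePred p]
    (h : ∀ π : G, ∃! i : ι, p (π * g i)) :
    Fintype.card ι * (Finset.univ.filter p).card = Fintype.card G := by
  have h1 : ∀ π : G, (Finset.univ.filter fun i => p (π * g i)).card = 1 := by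
    intro π
    obtain ⟨i, hi, hu⟩ := h π
    rw [Finset.card_eq_one]
    refine ⟨i, ?_⟩
    ext j
    simp only [Finset.mem_filter, Finset.mem_univ, true_and, Finset.mem_singleton]
    exact ⟨fun hj => hu j hj, fun hj => hj ▸ hi⟩
  have h2 : ∀ i : ι, (Finset.univ.filter fun π => p (π * g i)).card
      = (Finset.univ.filter p).card := by
    intro i
    apply Finset.card_bij' (fun π _ => π * g i) (fun τ _ => τ * (g i)⁻¹)
    · intro π hπ; simp only [Finset.mem_filter, Finset.mem_univ, true_and] at hπ ⊢; exact hπ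
    · intro τ hτ; simp only [Finset.mem_filter, Finset.mem_univ, true_and] at hτ ⊢
      simpa using hτ
    · intro π _; group
    · intro τ _; group
  calc Fintype.card ι * (Finset.univ.filter p).card
      = ∑ i : ι, (Finset.univ.filter p).card := by
        rw [Finset.sum_const, Finset.card_univ, smul_eq_mul]
    _ = ∑ i : ι, (Finset.univ.filter fun π => p (π * g i)).card := by simp [h2]
    _ = ∑ i : ι, ∑ π : G, if p (π * g i) then 1 else 0 :=
        Finset.sum_congr rfl fun i _ => Finset.card_filter _ _
    _ = ∑ π : G, ∑ i : ι, if p (π * g i) then 1 else 0 := Finset.sum_comm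
    _ = ∑ π : G, (Finset.univ.filter fun i => p (π * g i)).card :=
        Finset.sum_congr rfl fun π _ => (Finset.card_filter _ _).symm
    _ = ∑ π : G, 1 := by simp [h1]
    _ = Fintype.card G := by simp

lemma exl {a b c : ℕ} {P : Fin 3 → Prop} (hab : a ≠ b) (hac : a ≠ c) (hbc : b ≠ c)
    (h0 : P 0 ↔ a < c ∧ b < c) (h1 : P 1 ↔ b < a ∧ c < a) (h2 : P 2 ↔ c < b ∧ a < b) :
    ∃! i, P i := by
  have hall : ∀ j : Fin 3, j = 0 ∨ j = 1 ∨ j = 2 := by decide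
  have key : ∀ j : Fin 3, P j → (j = 0 ↔ a < c ∧ b < c) ∧ (j = 1 ↔ b < a ∧ c < a) ∧
      (j = 2 ↔ c < b ∧ a < b) := by
    intro j hj
    rcases hall j with e | e | e <;> subst e
    · rw [h0] at hj
      exact ⟨by simp [hj], ⟨fun hh => absurd hh (by decide), fun hh => by omega⟩,
        ⟨fun hh => absurd hh (by decide), fun hh => by omega⟩⟩
    · rw [h1] at hj
      exact ⟨⟨fun hh => absurd hh (by decide), fun hh => by omega⟩, by simp [hj],
        ⟨fun hh => absurd hh (by decide), fun hh => by omega⟩⟩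
    · rw [h2] at hj
      exact ⟨⟨fun hh => absurd hh (by decide), fun hh => by omega⟩,
        ⟨fun hh => absurd hh (by decide), fun hh => by omega⟩, by simp [hj]⟩
  by_cases H0 : a < c ∧ b < c
  · exact ⟨0, h0.mpr H0, fun j hj => ((key j hj).1).mpr H0⟩
  · by_cases H1 : b < a ∧ c < a
    · exact ⟨1, h1.mpr H1, fun j hj => ((key j hj).2.1).mpr H1⟩
    · have H2 : c < b ∧ a < b := by omega
      exact ⟨2, h2.mpr H2, fun j hj => ((key j hj).2.2).mpr H2⟩

lemma exu_prod {ι κ : Type*} {P : ι → Prop} {Q : κ → Prop} (hP : ∃! i, P i) (hQ : ∃! j, Q j) :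
    ∃! x : ι × κ, P x.1 ∧ Q x.2 := by
  obtain ⟨i, hi, hiu⟩ := hP; obtain ⟨j, hj, hju⟩ := hQ
  exact ⟨(i, j), ⟨hi, hj⟩, fun x hx => Prod.ext (hiu _ hx.1) (hju _ hx.2)⟩

lemma cyc_spec {α : Type*} [DecidableEq α] {a b c : α} (hab : a ≠ b) (hac : a ≠ c)
    (hbc : b ≠ c) :
    (Equiv.swap a b * Equiv.swap b c) a = b ∧ (Equiv.swap a b * Equiv.swap b c) b = c ∧
    (Equiv.swap a b * Equiv.swap b c) c = a ∧
    ∀ x, x ≠ a → x ≠ b → x ≠ c → (Equiv.swap a b * Equiv.swap b c) x = x := by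
  refine ⟨?_, ?_, ?_, ?_⟩
  · rw [Equiv.Perm.mul_apply, Equiv.swap_apply_of_ne_of_ne hab hac, Equiv.swap_apply_left]
  · rw [Equiv.Perm.mul_apply, Equiv.swap_apply_left,
      Equiv.swap_apply_of_ne_of_ne hac.symm hbc.symm]
  · rw [Equiv.Perm.mul_apply, Equiv.swap_apply_right, Equiv.swap_apply_right]
  · intro x hxa hxb hxc
    rw [Equiv.Perm.mul_apply, Equiv.swap_apply_of_ne_of_ne hxb hxc,
      Equiv.swap_apply_of_ne_of_ne hxa hxb]

theorem stmt9 (n : ℕ) (succ : Fin n → Fin n) (hs : ∀ v, succ v ≠ v)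
    (v1 v2 : Fin n) (hne : v1 ≠ v2)
    (h12 : succ v1 ≠ v2) (h21 : succ v2 ≠ v1)
    (h1 : (Finset.univ.filter (fun u => succ u = v1)).card = 2)
    (h2 : (Finset.univ.filter (fun u => succ u = v2)).card = 2)
    (hmax : ∀ v : Fin n, (Finset.univ.filter (fun u => succ u = v)).card ≤ 2) :
    ((Finset.univ.filter (fun π : Equiv.Perm (Fin n) =>
        (Finset.univ.filter (fun u => succ u = v1 ∧ π u < π v1)).card ≤ 1)).card : ℚ)
        / (n.factorial : ℚ) = 2 / 3 ∧
    ((Finset.univ.filter (fun π : Equiv.Perm (Fin n) =>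
        (Finset.univ.filter (fun u => succ u = v2 ∧ π u < π v2)).card ≤ 1)).card : ℚ)
        / (n.factorial : ℚ) = 2 / 3 ∧
    ((Finset.univ.filter (fun π : Equiv.Perm (Fin n) =>
        (Finset.univ.filter (fun u => succ u = v1 ∧ π u < π v1)).card ≤ 1 ∧
        (Finset.univ.filter (fun u => succ u = v2 ∧ π u < π v2)).card ≤ 1)).card : ℚ)
        / (n.factorial : ℚ) = 4 / 9 := by
  -- extract the in-neighbors
  obtain ⟨u1, u2, hu12, hU⟩ := Finset.card_eq_two.mp h1
  obtain ⟨w1, w2, hw12, hW⟩ := Finset.card_eq_two.mp h2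
  have hU' : ∀ u, succ u = v1 ↔ (u = u1 ∨ u = u2) := by
    intro u
    have := Finset.ext_iff.mp hU u
    simpa using this
  have hW' : ∀ u, succ u = v2 ↔ (u = w1 ∨ u = w2) := by
    intro u
    have := Finset.ext_iff.mp hW u
    simpa using this
  have su1 : succ u1 = v1 := (hU' u1).mpr (Or.inl rfl)
  have su2 : succ u2 = v1 := (hU' u2).mpr (Or.inr rfl)
  have sw1 : succ w1 = v2 := (hW' w1).mpr (Or.inl rfl)
  have sw2 : succ w2 = v2 := (hW' w2).mpr (Or.inr rfl)
  -- distinctness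
  have hu1v1 : u1 ≠ v1 := fun h => hs u1 (by rw [su1, h])
  have hu2v1 : u2 ≠ v1 := fun h => hs u2 (by rw [su2, h])
  have hw1v2 : w1 ≠ v2 := fun h => hs w1 (by rw [sw1, h])
  have hw2v2 : w2 ≠ v2 := fun h => hs w2 (by rw [sw2, h])
  have hu1v2 : u1 ≠ v2 := fun h => h21 (by rw [← h, su1])
  have hu2v2 : u2 ≠ v2 := fun h => h21 (by rw [← h, su2])
  have hw1v1 : w1 ≠ v1 := fun h => h12 (by rw [← h, sw1])
  have hw2v1 : w2 ≠ v1 := fun h => h12 (by rw [← h, sw2])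
  have hu1w1 : u1 ≠ w1 := fun h => hne (by rw [← su1, h, sw1])
  have hu1w2 : u1 ≠ w2 := fun h => hne (by rw [← su1, h, sw2])
  have hu2w1 : u2 ≠ w1 := fun h => hne (by rw [← su2, h, sw1])
  have hu2w2 : u2 ≠ w2 := fun h => hne (by rw [← su2, h, sw2])
  -- the two 3-cycles
  set σ1 : Equiv.Perm (Fin n) := Equiv.swap u1 u2 * Equiv.swap u2 v1 with hσ1
  set σ2 : Equiv.Perm (Fin n) := Equiv.swap w1 w2 * Equiv.swap w2 v2 with hσ2
  obtain ⟨s1a, s1b, s1c, s1fix⟩ := cyc_spec hu12 hu1v1 hu2v1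
  obtain ⟨s2a, s2b, s2c, s2fix⟩ := cyc_spec hw12 hw1v2 hw2v2
  rw [← hσ1] at s1a s1b s1c s1fix
  rw [← hσ2] at s2a s2b s2c s2fix
  -- rewriting the events
  have hevent1 : ∀ π : Equiv.Perm (Fin n),
      ((Finset.univ.filter (fun u => succ u = v1 ∧ π u < π v1)).card ≤ 1 ↔
        ¬(π u1 < π v1 ∧ π u2 < π v1)) := by
    intro π
    have hset : (Finset.univ.filter (fun u => succ u = v1 ∧ π u < π v1))
        = ({u1, u2} : Finset (Fin n)).filter (fun u => π u < π v1) := by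
      ext u
      simp [hU' u, and_comm]
    rw [hset]
    by_cases hA : π u1 < π v1 <;> by_cases hB : π u2 < π v1 <;>
      simp [Finset.filter_insert, Finset.filter_singleton, hA, hB, hu12]
  have hevent2 : ∀ π : Equiv.Perm (Fin n),
      ((Finset.univ.filter (fun u => succ u = v2 ∧ π u < π v2)).card ≤ 1 ↔
        ¬(π w1 < π v2 ∧ π w2 < π v2)) := by
    intro π
    have hset : (Finset.univ.filter (fun u => succ u = v2 ∧ π u < π v2))
        = ({w1, w2} : Finset (Fin n)).filter (fun u => π u < π v2) := by
      ext u
      simp [hW' u, and_comm]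
    rw [hset]
    by_cases hA : π w1 < π v2 <;> by_cases hB : π w2 < π v2 <;>
      simp [Finset.filter_insert, Finset.filter_singleton, hA, hB, hw12]
  -- unique translate lemmas
  have huniq1 : ∀ π : Equiv.Perm (Fin n), ∃! i : Fin 3,
      ((π * σ1 ^ (i : ℕ)) u1 < (π * σ1 ^ (i : ℕ)) v1 ∧
        (π * σ1 ^ (i : ℕ)) u2 < (π * σ1 ^ (i : ℕ)) v1) := by
    intro π
    have d1 : (π u1).val ≠ (π u2).val :=
      fun h => hu12 (π.injective (Fin.val_injective h))
    have d2 : (π u1).val ≠ (π v1).val :=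
      fun h => hu1v1 (π.injective (Fin.val_injective h))
    have d3 : (π u2).val ≠ (π v1).val :=
      fun h => hu2v1 (π.injective (Fin.val_injective h))
    have p0 : σ1 ^ ((0 : Fin 3) : ℕ) = 1 := by norm_num
    have p1 : σ1 ^ ((1 : Fin 3) : ℕ) = σ1 := by norm_num
    have p2 : σ1 ^ ((2 : Fin 3) : ℕ) = σ1 * σ1 := by norm_num [pow_succ]
    refine exl d1 d2 d3 ?_ ?_ ?_
    · rw [p0, mul_one]; exact Iff.rfl
    · rw [p1]; simp only [Equiv.Perm.mul_apply, s1a, s1b, s1c]; exact Iff.rfl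
    · rw [p2]; simp only [Equiv.Perm.mul_apply, s1a, s1b, s1c]; exact Iff.rfl
  have huniq2 : ∀ π : Equiv.Perm (Fin n), ∃! i : Fin 3,
      ((π * σ2 ^ (i : ℕ)) w1 < (π * σ2 ^ (i : ℕ)) v2 ∧
        (π * σ2 ^ (i : ℕ)) w2 < (π * σ2 ^ (i : ℕ)) v2) := by
    intro π
    have d1 : (π w1).val ≠ (π w2).val :=
      fun h => hw12 (π.injective (Fin.val_injective h))
    have d2 : (π w1).val ≠ (π v2).val :=
      fun h => hw1v2 (π.injective (Fin.val_injective h))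
    have d3 : (π w2).val ≠ (π v2).val :=
      fun h => hw2v2 (π.injective (Fin.val_injective h))
    have p0 : σ2 ^ ((0 : Fin 3) : ℕ) = 1 := by norm_num
    have p1 : σ2 ^ ((1 : Fin 3) : ℕ) = σ2 := by norm_num
    have p2 : σ2 ^ ((2 : Fin 3) : ℕ) = σ2 * σ2 := by norm_num [pow_succ]
    refine exl d1 d2 d3 ?_ ?_ ?_
    · rw [p0, mul_one]; exact Iff.rfl
    · rw [p1]; simp only [Equiv.Perm.mul_apply, s2a, s2b, s2c]; exact Iff.rfl
    · rw [p2]; simp only [Equiv.Perm.mul_apply, s2a, s2b, s2c]; exact Iff.rfl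
  have hcardG : Fintype.card (Equiv.Perm (Fin n)) = n.factorial := by
    simp [Fintype.card_perm]
  -- counting the bad sets
  have key1 : 3 * (Finset.univ.filter
      (fun π : Equiv.Perm (Fin n) => π u1 < π v1 ∧ π u2 < π v1)).card = n.factorial := by
    have := cnt (fun i : Fin 3 => σ1 ^ (i : ℕ))
      (fun π : Equiv.Perm (Fin n) => π u1 < π v1 ∧ π u2 < π v1) huniq1
    simpa [hcardG] using this
  have key2 : 3 * (Finset.univ.filter
      (fun π : Equiv.Perm (Fin n) => π w1 < π v2 ∧ π w2 < π v2)).card = n.factorial := by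
    have := cnt (fun i : Fin 3 => σ2 ^ (i : ℕ))
      (fun π : Equiv.Perm (Fin n) => π w1 < π v2 ∧ π w2 < π v2) huniq2
    simpa [hcardG] using this
  -- joint count
  have key12 : 9 * (Finset.univ.filter (fun π : Equiv.Perm (Fin n) =>
      (π u1 < π v1 ∧ π u2 < π v1) ∧ (π w1 < π v2 ∧ π w2 < π v2))).card = n.factorial := by
    have hstab : ∀ (k : ℕ) (x : Fin n), (x = w1 ∨ x = w2 ∨ x = v2) →
        ((σ2 ^ k) x = w1 ∨ (σ2 ^ k) x = w2 ∨ (σ2 ^ k) x = v2) := by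
      intro k
      induction k with
      | zero => intro x hx; simpa using hx
      | succ k ih =>
        intro x hx
        rw [pow_succ, Equiv.Perm.mul_apply]
        rcases hx with h | h | h <;> subst h
        · exact ih _ (by rw [s2a]; tauto)
        · exact ih _ (by rw [s2b]; tauto)
        · exact ih _ (by rw [s2c]; tauto)
    have hfixA : ∀ (j : ℕ) (x : Fin n), (x = u1 ∨ x = u2 ∨ x = v1) → (σ2 ^ j) x = x := by
      intro j x hx
      refine pow_fix σ2 ?_ j
      rcases hx with h | h | h <;> subst h
      · exact s2fix _ hu1w1 hu1w2 hu1v2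
      · exact s2fix _ hu2w1 hu2w2 hu2v2
      · exact s2fix _ hw1v1.symm hw2v1.symm hne
    have hfixB : ∀ (i j : ℕ) (x : Fin n), (x = w1 ∨ x = w2 ∨ x = v2) →
        (σ1 ^ i) ((σ2 ^ j) x) = (σ2 ^ j) x := by
      intro i j x hx
      refine pow_fix σ1 ?_ i
      rcases hstab j x hx with h | h | h <;> rw [h]
      · exact s1fix _ hu1w1.symm hu2w1.symm hw1v1
      · exact s1fix _ hu1w2.symm hu2w2.symm hw2v1
      · exact s1fix _ hu1v2.symm hu2v2.symm hne.symm
    have := cnt (fun x : Fin 3 × Fin 3 => σ1 ^ (x.1 : ℕ) * σ2 ^ (x.2 : ℕ))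
      (fun π : Equiv.Perm (Fin n) =>
        (π u1 < π v1 ∧ π u2 < π v1) ∧ (π w1 < π v2 ∧ π w2 < π v2)) ?_
    · simpa [hcardG] using this
    · intro π
      have hre : ∀ x : Fin 3 × Fin 3,
          (((π * (σ1 ^ (x.1 : ℕ) * σ2 ^ (x.2 : ℕ))) u1 < (π * (σ1 ^ (x.1 : ℕ) * σ2 ^ (x.2 : ℕ))) v1 ∧
            (π * (σ1 ^ (x.1 : ℕ) * σ2 ^ (x.2 : ℕ))) u2 < (π * (σ1 ^ (x.1 : ℕ) * σ2 ^ (x.2 : ℕ))) v1) ∧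
           ((π * (σ1 ^ (x.1 : ℕ) * σ2 ^ (x.2 : ℕ))) w1 < (π * (σ1 ^ (x.1 : ℕ) * σ2 ^ (x.2 : ℕ))) v2 ∧
            (π * (σ1 ^ (x.1 : ℕ) * σ2 ^ (x.2 : ℕ))) w2 < (π * (σ1 ^ (x.1 : ℕ) * σ2 ^ (x.2 : ℕ))) v2))
          ↔ (((π * σ1 ^ (x.1 : ℕ)) u1 < (π * σ1 ^ (x.1 : ℕ)) v1 ∧
              (π * σ1 ^ (x.1 : ℕ)) u2 < (π * σ1 ^ (x.1 : ℕ)) v1) ∧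
             ((π * σ2 ^ (x.2 : ℕ)) w1 < (π * σ2 ^ (x.2 : ℕ)) v2 ∧
              (π * σ2 ^ (x.2 : ℕ)) w2 < (π * σ2 ^ (x.2 : ℕ)) v2)) := by
        intro x
        have eA : ∀ y : Fin n, (y = u1 ∨ y = u2 ∨ y = v1) →
            (π * (σ1 ^ (x.1 : ℕ) * σ2 ^ (x.2 : ℕ))) y = (π * σ1 ^ (x.1 : ℕ)) y := by
          intro y hy
          simp only [Equiv.Perm.mul_apply]
          rw [hfixA (x.2 : ℕ) y hy]
        have eB : ∀ y : Fin n, (y = w1 ∨ y = w2 ∨ y = v2) →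
            (π * (σ1 ^ (x.1 : ℕ) * σ2 ^ (x.2 : ℕ))) y = (π * σ2 ^ (x.2 : ℕ)) y := by
          intro y hy
          simp only [Equiv.Perm.mul_apply]
          rw [hfixB (x.1 : ℕ) (x.2 : ℕ) y hy]
        rw [eA u1 (by tauto), eA u2 (by tauto), eA v1 (by tauto),
          eB w1 (by tauto), eB w2 (by tauto), eB v2 (by tauto)]
      obtain ⟨x, hx, hxu⟩ := exu_prod (huniq1 π) (huniq2 π)
      exact ⟨x, (hre x).mpr hx, fun y hy => hxu y ((hre y).mp hy)⟩
  -- final assembly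
  have hNpos : 0 < n.factorial := Nat.factorial_pos n
  have hN0 : (n.factorial : ℚ) ≠ 0 := by positivity
  set B1 := (Finset.univ.filter
    (fun π : Equiv.Perm (Fin n) => π u1 < π v1 ∧ π u2 < π v1)) with hB1
  set B2 := (Finset.univ.filter
    (fun π : Equiv.Perm (Fin n) => π w1 < π v2 ∧ π w2 < π v2)) with hB2
  have huniv : (Finset.univ : Finset (Equiv.Perm (Fin n))).card = n.factorial := by
    rw [Finset.card_univ, hcardG]
  have hc1 : (Finset.univ.filter (fun π : Equiv.Perm (Fin n) =>
      (Finset.univ.filter (fun u => succ u = v1 ∧ π u < π v1)).card ≤ 1)).card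
      = n.factorial - B1.card := by
    have : (Finset.univ.filter (fun π : Equiv.Perm (Fin n) =>
        (Finset.univ.filter (fun u => succ u = v1 ∧ π u < π v1)).card ≤ 1))
        = Finset.univ.filter (fun π : Equiv.Perm (Fin n) =>
            ¬(π u1 < π v1 ∧ π u2 < π v1)) := by
      apply Finset.filter_congr
      intro π _
      simpa using hevent1 π
    rw [this, Finset.filter_not, Finset.card_sdiff_of_subset (Finset.filter_subset _ _), huniv, hB1]
  have hc2 : (Finset.univ.filter (fun π : Equiv.Perm (Fin n) =>
      (Finset.univ.filter (fun u => succ u = v2 ∧ π u < π v2)).card ≤ 1)).card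
      = n.factorial - B2.card := by
    have : (Finset.univ.filter (fun π : Equiv.Perm (Fin n) =>
        (Finset.univ.filter (fun u => succ u = v2 ∧ π u < π v2)).card ≤ 1))
        = Finset.univ.filter (fun π : Equiv.Perm (Fin n) =>
            ¬(π w1 < π v2 ∧ π w2 < π v2)) := by
      apply Finset.filter_congr
      intro π _
      simpa using hevent2 π
    rw [this, Finset.filter_not, Finset.card_sdiff_of_subset (Finset.filter_subset _ _), huniv, hB2]
  have hOr : (Finset.univ.filter (fun π : Equiv.Perm (Fin n) =>
        (π u1 < π v1 ∧ π u2 < π v1) ∨ (π w1 < π v2 ∧ π w2 < π v2))).card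
      + (Finset.univ.filter (fun π : Equiv.Perm (Fin n) =>
        (π u1 < π v1 ∧ π u2 < π v1) ∧ (π w1 < π v2 ∧ π w2 < π v2))).card
      = B1.card + B2.card := by
    have hui := Finset.card_union_add_card_inter B1 B2
    rw [hB1, hB2, ← Finset.filter_or, ← Finset.filter_and] at hui
    exact hui
  have hc3 : (Finset.univ.filter (fun π : Equiv.Perm (Fin n) =>
      (Finset.univ.filter (fun u => succ u = v1 ∧ π u < π v1)).card ≤ 1 ∧
      (Finset.univ.filter (fun u => succ u = v2 ∧ π u < π v2)).card ≤ 1)).card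
      = n.factorial - (Finset.univ.filter (fun π : Equiv.Perm (Fin n) =>
        (π u1 < π v1 ∧ π u2 < π v1) ∨ (π w1 < π v2 ∧ π w2 < π v2))).card := by
    have : (Finset.univ.filter (fun π : Equiv.Perm (Fin n) =>
        (Finset.univ.filter (fun u => succ u = v1 ∧ π u < π v1)).card ≤ 1 ∧
        (Finset.univ.filter (fun u => succ u = v2 ∧ π u < π v2)).card ≤ 1))
        = Finset.univ.filter (fun π : Equiv.Perm (Fin n) =>
            ¬((π u1 < π v1 ∧ π u2 < π v1) ∨ (π w1 < π v2 ∧ π w2 < π v2))) := by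
      apply Finset.filter_congr
      intro π _
      rw [not_or]
      exact and_congr (hevent1 π) (hevent2 π)
    rw [this, Finset.filter_not, Finset.card_sdiff_of_subset (Finset.filter_subset _ _), huniv]
  have hOrle : (Finset.univ.filter (fun π : Equiv.Perm (Fin n) =>
      (π u1 < π v1 ∧ π u2 < π v1) ∨ (π w1 < π v2 ∧ π w2 < π v2))).card ≤ n.factorial := by
    rw [← huniv]; exact Finset.card_filter_le _ _
  have hB1le : B1.card ≤ n.factorial := by omega
  have hB2le : B2.card ≤ n.factorial := by omega
  refine ⟨?_, ?_, ?_⟩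
  · rw [hc1, div_eq_div_iff hN0 (by norm_num), Nat.cast_sub hB1le]
    have : (3 : ℚ) * B1.card = n.factorial := by exact_mod_cast key1
    ring_nf
    linarith
  · rw [hc2, div_eq_div_iff hN0 (by norm_num), Nat.cast_sub hB2le]
    have : (3 : ℚ) * B2.card = n.factorial := by exact_mod_cast key2
    ring_nf
    linarith
  · rw [hc3, div_eq_div_iff hN0 (by norm_num), Nat.cast_sub hOrle]
    have e1 : 9 * (Finset.univ.filter (fun π : Equiv.Perm (Fin n) =>
        (π u1 < π v1 ∧ π u2 < π v1) ∨ (π w1 < π v2 ∧ π w2 < π v2))).card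
        = 5 * n.factorial := by omega
    have : (9 : ℚ) * (Finset.univ.filter (fun π : Equiv.Perm (Fin n) =>
        (π u1 < π v1 ∧ π u2 < π v1) ∨ (π w1 < π v2 ∧ π w2 < π v2))).card
        = 5 * n.factorial := by exact_mod_cast e1
    ring_nf
    linarith
end

section
/- Let V be a finite set, v₁, v₂ ∈ V distinct, and suppose v₂'s in-neighborhood has size ⌊Δ/2⌋ with v₁ having Δ in-neighbors, where possibly edges exist between v₁ and v₂. Define P_{1<2}(n) as the set of permutations π with δ⁻_{π<v₁}(v₁) ≤ ⌊Δ/2⌋ = δ⁻_{π<v₂}(v₂) and v₁ preceding v₂, and P_{2<1}(n) analogously with v₂ preceding v₁. Then the map swapping the positions of v₁ and v₂ in a permutation is an injection from P_{2<1}(n) to P_{1<2}(n), so |P_{1<2}(n)| ≥ |P_{2<1}(n)|. -/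
open scoped Classical

theorem stmt10 (n : ℕ) (Δ : ℕ) (succ : Fin n → Fin n) (hs : ∀ v, succ v ≠ v)
    (v1 v2 : Fin n) (hne : v1 ≠ v2)
    (h1 : (Finset.univ.filter (fun u => succ u = v1)).card = Δ)
    (h2 : (Finset.univ.filter (fun u => succ u = v2)).card = Δ / 2) :
    let P12 : Finset (Equiv.Perm (Fin n)) := Finset.univ.filter (fun π =>
        (Finset.univ.filter (fun u => succ u = v1 ∧ π u < π v1)).card ≤ Δ / 2 ∧
        (Finset.univ.filter (fun u => succ u = v2 ∧ π u < π v2)).card = Δ / 2 ∧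
        π v1 < π v2)
    let P21 : Finset (Equiv.Perm (Fin n)) := Finset.univ.filter (fun π =>
        (Finset.univ.filter (fun u => succ u = v1 ∧ π u < π v1)).card ≤ Δ / 2 ∧
        (Finset.univ.filter (fun u => succ u = v2 ∧ π u < π v2)).card = Δ / 2 ∧
        π v2 < π v1)
    (∀ π ∈ P21, (Equiv.swap v1 v2).trans π ∈ P12) ∧
    Function.Injective (fun π : Equiv.Perm (Fin n) => (Equiv.swap v1 v2).trans π) ∧
    P21.card ≤ P12.card := by
  intro P12 P21
  have key : ∀ π ∈ P21, (Equiv.swap v1 v2).trans π ∈ P12 := by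
    intro π hπ
    simp only [P21, P12, Finset.mem_filter, Finset.mem_univ, true_and] at hπ ⊢
    obtain ⟨ha, hb, hc⟩ := hπ
    have e1 : ((Equiv.swap v1 v2).trans π) v1 = π v2 := by simp
    have e2 : ((Equiv.swap v1 v2).trans π) v2 = π v1 := by simp
    refine ⟨?_, ?_, ?_⟩
    · refine le_trans (Finset.card_le_card ?_) ha
      intro u hu
      simp only [Finset.mem_filter, Finset.mem_univ, true_and] at hu ⊢
      obtain ⟨h1u, h2u⟩ := hu
      refine ⟨h1u, ?_⟩
      rcases eq_or_ne u v2 with rfl | huv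
      · rw [e2, e1] at h2u; exact absurd (lt_trans h2u hc) (lt_irrefl _)
      · have heq : ((Equiv.swap v1 v2).trans π) u = π u := by
          have h1' : u ≠ v1 := by rintro rfl; exact hs _ h1u
          simp [Equiv.swap_apply_of_ne_of_ne h1' huv]
        rw [heq, e1] at h2u
        exact lt_trans h2u hc
    · have hsub : (Finset.univ.filter (fun u => succ u = v2 ∧ π u < π v2)) ⊆
          (Finset.univ.filter (fun u => succ u = v2 ∧
            ((Equiv.swap v1 v2).trans π) u < ((Equiv.swap v1 v2).trans π) v2)) := by
        intro u hu
        simp only [Finset.mem_filter, Finset.mem_univ, true_and] at hu ⊢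
        obtain ⟨h1u, h2u⟩ := hu
        refine ⟨h1u, ?_⟩
        rcases eq_or_ne u v1 with rfl | huv
        · exact absurd h2u (lt_asymm hc)
        · have h2' : u ≠ v2 := by rintro rfl; exact hs _ h1u
          have heq : ((Equiv.swap v1 v2).trans π) u = π u := by
            simp [Equiv.swap_apply_of_ne_of_ne huv h2']
          rw [heq, e2]; exact lt_trans h2u hc
      have hup : (Finset.univ.filter (fun u => succ u = v2 ∧
          ((Equiv.swap v1 v2).trans π) u < ((Equiv.swap v1 v2).trans π) v2)).card ≤ Δ / 2 := by
        rw [← h2]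
        apply Finset.card_le_card
        intro u hu
        simp only [Finset.mem_filter, Finset.mem_univ, true_and] at hu ⊢
        exact hu.1
      exact le_antisymm hup (hb ▸ Finset.card_le_card hsub)
    · rw [e1, e2]; exact hc
  have hinj : Function.Injective
      (fun π : Equiv.Perm (Fin n) => (Equiv.swap v1 v2).trans π) := by
    intro a b h
    have := congrArg (fun π => (Equiv.swap v1 v2).symm.trans π) h
    simpa [← Equiv.trans_assoc] using this
  exact ⟨key, hinj, Finset.card_le_card_of_injOn _ key (fun a _ b _ h => hinj h)⟩
end

section
/- For every n ∈ {2,3,4,5} and every G ∈ 𝒢ₙ with Δ(G) > 0, the expected indegree of the vertex chosen by random dictatorship (which selects v with probability δ⁻(v)/n) is at least (1/2 + 1/n)·Δ(G). -/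
theorem stmt12 (n : ℕ) (hn2 : 2 ≤ n) (hn5 : n ≤ 5)
    (succ : Fin n → Fin n) (hs : ∀ v, succ v ≠ v)
    (Δ : ℕ)
    (hΔ : Δ = Finset.univ.sup (fun v : Fin n => (Finset.univ.filter (fun u => succ u = v)).card))
    (hΔpos : 0 < Δ) :
    (1 / (n : ℚ)) * ∑ v : Fin n, ((Finset.univ.filter (fun u => succ u = v)).card : ℚ) ^ 2 ≥
      (1 / 2 + 1 / (n : ℚ)) * (Δ : ℚ) := by
  set d : Fin n → ℕ := fun v => (Finset.univ.filter (fun u => succ u = v)).card with hd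
  haveI : NeZero n := ⟨by omega⟩
  -- sum of indegrees is n
  have hsum : ∑ v : Fin n, d v = n := by
    have := Finset.card_eq_sum_card_fiberwise
      (f := succ) (s := (Finset.univ : Finset (Fin n))) (t := Finset.univ)
      (fun x _ => Finset.mem_univ _)
    simpa [hd, Finset.card_univ] using this.symm
  -- the sup is attained
  obtain ⟨v0, -, hv0⟩ := Finset.exists_mem_eq_sup (Finset.univ : Finset (Fin n))
    (Finset.univ_nonempty) d
  have hΔv0 : Δ = d v0 := by rw [hΔ]; exact hv0
  -- each indegree is ≤ n - 1
  have hdle : ∀ v, d v ≤ n - 1 := by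
    intro v
    have hsub : (Finset.univ.filter (fun u => succ u = v)) ⊆ Finset.univ.erase v := by
      intro u hu
      simp only [Finset.mem_filter] at hu
      refine Finset.mem_erase.2 ⟨?_, Finset.mem_univ _⟩
      intro h; exact hs u (by rw [← h] at hu; exact hu.2)
    calc d v ≤ (Finset.univ.erase v).card := Finset.card_le_card hsub
      _ = n - 1 := by rw [Finset.card_erase_of_mem (Finset.mem_univ _), Finset.card_univ,
        Fintype.card_fin]
  have hΔle : Δ ≤ n - 1 := hΔv0 ▸ hdle v0
  -- sum over the other vertices
  have herase : ∑ v ∈ Finset.univ.erase v0, d v = n - Δ := by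
    have := Finset.add_sum_erase (Finset.univ : Finset (Fin n)) d (Finset.mem_univ v0)
    omega
  -- lower bound on the sum of squares
  have hS : ∑ v : Fin n, (d v : ℚ) ^ 2 ≥ (Δ : ℚ) ^ 2 + ((n : ℚ) - Δ) := by
    have h1 : ∑ v : Fin n, (d v : ℚ) ^ 2
        = (d v0 : ℚ) ^ 2 + ∑ v ∈ Finset.univ.erase v0, (d v : ℚ) ^ 2 :=
      (Finset.add_sum_erase (Finset.univ : Finset (Fin n)) (fun v => (d v : ℚ) ^ 2)
        (Finset.mem_univ v0)).symm
    have h2 : ∑ v ∈ Finset.univ.erase v0, (d v : ℚ) ^ 2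
        ≥ ∑ v ∈ Finset.univ.erase v0, (d v : ℚ) := by
      apply Finset.sum_le_sum
      intro i _
      have : d i ≤ d i ^ 2 := Nat.le_self_pow two_ne_zero _
      exact_mod_cast this
    have hΔn : Δ ≤ n := by omega
    have h3 : ∑ v ∈ Finset.univ.erase v0, (d v : ℚ) = (n : ℚ) - Δ := by
      rw [← Nat.cast_sum, herase, Nat.cast_sub hΔn]
    rw [h1, ← hΔv0]
    linarith
  -- key factored inequality
  have hkey : ((2 * Δ : ℚ) - n) * ((Δ : ℚ) - 2) ≥ 0 := by
    rcases le_or_gt Δ 2 with h | h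
    · interval_cases Δ
      · have : (2 : ℚ) ≤ n := by exact_mod_cast hn2
        push_cast
        nlinarith
      · norm_num
    · have h3 : (3 : ℚ) ≤ (Δ : ℚ) := by exact_mod_cast h
      have hn : (n : ℚ) ≤ 5 := by exact_mod_cast hn5
      nlinarith
  have hnpos : (0 : ℚ) < n := by positivity
  rw [ge_iff_le, div_add_div _ _ (by norm_num) (ne_of_gt hnpos), div_mul_eq_mul_div,
    one_div, ← div_eq_inv_mul, div_le_div_iff₀ (by positivity) hnpos]
  nlinarith [hS, hkey, hnpos]
end

section
/- Let n ≥ 6, n' = ⌊n/2⌋ − 1, and let x₁,…,x_{n'} ∈ [0,1] and p₂, p₄,…,p_n ∈ [0,1] satisfy: p₂ + Σ_{v=4}^{n} p_v ≥ (n²−4n+2)/(n(n−2)); p₂ + p₄ + p_n + x₁ ≤ 1; and p_{n−i+1} + p_{i+3} + x_{i−1} + x_i ≤ 1 for all i ∈ {2,…,n'}. Then min_{i∈{1,…,n'}} x_i ≤ (1/(2(n−4)))·(n − 3 − 2(n²−4n+2)/(n(n−2))). -/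
open Finset

private lemma sum_shift3' (f : ℕ → ℝ) (a b : ℕ) :
    ∑ i ∈ Ioc a b, f (i + 3) = ∑ v ∈ Ioc (a+3) (b+3), f v := by
  rw [← Finset.map_add_right_Ioc, Finset.sum_map]
  rfl

private lemma sum_reflect' (f : ℕ → ℝ) (a b N : ℕ) (h : b ≤ N) :
    ∑ i ∈ Ioc a b, f (N - i) = ∑ v ∈ Ico (N - b) (N - a), f v := by
  apply Finset.sum_nbij' (fun i => N - i) (fun v => N - v) <;>
    (intros; simp_all only [Finset.mem_Ioc, Finset.mem_Ico]) <;> omega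

private lemma sum_subone' (f : ℕ → ℝ) (b : ℕ) :
    ∑ i ∈ Ioc 1 b, f (i - 1) = ∑ v ∈ Ioc 0 (b-1), f v := by
  apply Finset.sum_nbij' (fun i => i - 1) (fun v => v + 1) <;>
    (intros; simp_all only [Finset.mem_Ioc]) <;> omega

theorem stmt18 (n : ℕ) (hn : 6 ≤ n) (n' : ℕ) (hn' : n' = n / 2 - 1)
    (x p : ℕ → ℝ)
    (hx : ∀ i ∈ Finset.Icc 1 n', 0 ≤ x i ∧ x i ≤ 1)
    (hp : ∀ v : ℕ, (v = 2 ∨ (4 ≤ v ∧ v ≤ n)) → 0 ≤ p v ∧ p v ≤ 1)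
    (h0 : p 2 + ∑ v ∈ Finset.Icc 4 n, p v ≥
      ((n : ℝ) ^ 2 - 4 * (n : ℝ) + 2) / ((n : ℝ) * ((n : ℝ) - 2)))
    (h1 : p 2 + p 4 + p n + x 1 ≤ 1)
    (hi : ∀ i : ℕ, 2 ≤ i → i ≤ n' → p (n - i + 1) + p (i + 3) + x (i - 1) + x i ≤ 1) :
    ∃ i ∈ Finset.Icc 1 n', x i ≤
      (1 / (2 * ((n : ℝ) - 4))) *
        ((n : ℝ) - 3 - 2 * ((n : ℝ) ^ 2 - 4 * (n : ℝ) + 2) / ((n : ℝ) * ((n : ℝ) - 2))) := by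
  by_contra hcon
  push_neg at hcon
  have hk2 : 2 ≤ n' := by omega
  have cast2 : ((n' - 2 : ℕ) : ℝ) = (n' : ℝ) - 2 := by
    rw [Nat.cast_sub hk2]; norm_num
  have cast1 : ((n' - 1 : ℕ) : ℝ) = (n' : ℝ) - 1 := by
    rw [Nat.cast_sub (by omega)]; norm_num
  have hkR : (2:ℝ) ≤ (n' : ℝ) := by exact_mod_cast hk2
  obtain ⟨M, hMdef⟩ : ∃ M : ℝ, M =
      (1 / (2 * ((n : ℝ) - 4))) *
        ((n : ℝ) - 3 - 2 * ((n : ℝ) ^ 2 - 4 * (n : ℝ) + 2) / ((n : ℝ) * ((n : ℝ) - 2))) :=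
    ⟨_, rfl⟩
  rw [← hMdef] at hcon
  rcases Nat.even_or_odd n with he | ho
  · -- even case : n = 2 * n' + 2
    have hnk : n = 2 * n' + 2 := by rcases he with ⟨m, hm⟩; omega
    subst hnk
    -- sum of the middle inequalities
    have hsum : ∑ i ∈ Ioc 1 (n'-1), (p (2*n'+2 - i + 1) + p (i+3) + x (i-1) + x i)
        ≤ ((n':ℝ) - 2) := by
      calc ∑ i ∈ Ioc 1 (n'-1), (p (2*n'+2 - i + 1) + p (i+3) + x (i-1) + x i)
          ≤ ∑ i ∈ Ioc 1 (n'-1), (1:ℝ) := by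
            apply Finset.sum_le_sum
            intro i hi'
            simp only [Finset.mem_Ioc] at hi'
            exact hi i (by omega) (by omega)
        _ = ((n':ℝ) - 2) := by
            rw [Finset.sum_const, Nat.card_Ioc, nsmul_eq_mul, mul_one,
              show n' - 1 - 1 = n' - 2 from by omega, cast2]
    rw [Finset.sum_add_distrib, Finset.sum_add_distrib, Finset.sum_add_distrib] at hsum
    have hA : ∑ i ∈ Ioc 1 (n'-1), p (2*n'+2 - i + 1) = ∑ v ∈ Ioc (n'+3) (2*n'+1), p v := by
      rw [Finset.sum_congr rfl (fun i hi' => by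
        simp only [Finset.mem_Ioc] at hi'
        show p (2*n'+2 - i + 1) = p (2*n'+3 - i)
        congr 1; omega)]
      rw [sum_reflect' p 1 (n'-1) (2*n'+3) (by omega)]
      congr 1
      ext v
      simp only [Finset.mem_Ico, Finset.mem_Ioc]
      omega
    have hB : ∑ i ∈ Ioc 1 (n'-1), p (i+3) = ∑ v ∈ Ioc 4 (n'+2), p v := by
      rw [sum_shift3' p 1 (n'-1), show n'-1+3 = n'+2 from by omega]
    have hC : ∑ i ∈ Ioc 1 (n'-1), x (i-1) = ∑ v ∈ Ioc 0 (n'-2), x v := by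
      rw [sum_subone' x (n'-1), show n' - 1 - 1 = n' - 2 from by omega]
    rw [hA, hB, hC] at hsum
    -- assemble the p-sum
    have e0 : ∑ v ∈ Ioc 4 (2*n'+2), p v = ∑ v ∈ Ioc 4 (2*n'+1), p v + p (2*n'+2) := by
      rw [show 2*n'+2 = 2*n'+1+1 from rfl]
      exact Finset.sum_Ioc_succ_top (by omega) p
    have e1 : ∑ v ∈ Ioc 4 (2*n'+1), p v
        = ∑ v ∈ Ioc 4 (n'+2), p v + ∑ v ∈ Ioc (n'+2) (2*n'+1), p v :=
      (Finset.sum_Ioc_consecutive p (by omega) (by omega)).symm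
    have e2 : ∑ v ∈ Ioc (n'+2) (2*n'+1), p v
        = p (n'+3) + ∑ v ∈ Ioc (n'+3) (2*n'+1), p v := by
      rw [show Ioc (n'+2) (2*n'+1) = Icc (n'+3) (2*n'+1) from (Finset.Icc_add_one_left_eq_Ioc (n'+2) _).symm,
        Finset.Icc_eq_cons_Ioc (by omega), Finset.sum_cons]
    have hP : ∑ v ∈ Icc 4 (2*n'+2), p v
        = p 4 + (∑ v ∈ Ioc 4 (n'+2), p v + (p (n'+3) + ∑ v ∈ Ioc (n'+3) (2*n'+1), p v))
          + p (2*n'+2) := by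
      rw [Finset.Icc_eq_cons_Ioc (by omega), Finset.sum_cons, e0, e1, e2]
      ring
    -- the special middle inequality at i = n'
    have hik : p (n'+3) + p (n'+3) + x (n'-1) + x n' ≤ 1 := by
      have := hi n' (by omega) (by omega)
      rwa [show 2*n'+2 - n' + 1 = n'+3 from by omega] at this
    -- lower bounds from hcon
    have hx1 : M < x 1 := hcon 1 (by simp only [Finset.mem_Icc]; omega)
    have hxk1 : M < x (n'-1) := hcon (n'-1) (by simp only [Finset.mem_Icc]; omega)
    have hxk : M < x n' := hcon n' (by simp only [Finset.mem_Icc]; omega)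
    have hCb : ((n':ℝ) - 2) * M ≤ ∑ v ∈ Ioc 0 (n'-2), x v := by
      calc ((n':ℝ) - 2) * M = ∑ _v ∈ Ioc 0 (n'-2), M := by
            rw [Finset.sum_const, Nat.card_Ioc, nsmul_eq_mul, Nat.sub_zero, cast2]
        _ ≤ ∑ v ∈ Ioc 0 (n'-2), x v := by
            apply Finset.sum_le_sum
            intro i hi'
            simp only [Finset.mem_Ioc] at hi'
            exact (hcon i (by simp only [Finset.mem_Icc]; omega)).le
    have hDb : ((n':ℝ) - 2) * M ≤ ∑ v ∈ Ioc 1 (n'-1), x v := by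
      calc ((n':ℝ) - 2) * M = ∑ _v ∈ Ioc 1 (n'-1), M := by
            rw [Finset.sum_const, Nat.card_Ioc, nsmul_eq_mul,
              show n' - 1 - 1 = n' - 2 from by omega, cast2]
        _ ≤ ∑ v ∈ Ioc 1 (n'-1), x v := by
            apply Finset.sum_le_sum
            intro i hi'
            simp only [Finset.mem_Ioc] at hi'
            exact (hcon i (by simp only [Finset.mem_Icc]; omega)).le
    have hS : ((((2*n'+2 : ℕ)) : ℝ) ^ 2 - 4 * (((2*n'+2 : ℕ)) : ℝ) + 2) /
        ((((2*n'+2 : ℕ)) : ℝ) * ((((2*n'+2 : ℕ)) : ℝ) - 2))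
        ≤ p 2 + ∑ v ∈ Icc 4 (2*n'+2), p v := h0
    rw [hP] at hS
    push_cast at hS
    obtain ⟨Q, hQdef⟩ : ∃ q : ℝ, q = ((2*(n':ℝ)+2) ^ 2 - 4 * (2*(n':ℝ)+2) + 2) /
        ((2*(n':ℝ)+2) * (2*(n':ℝ)+2 - 2)) := ⟨_, rfl⟩
    rw [← hQdef] at hS
    -- final arithmetic identity
    have hEq : 2 * Q + (4*(n':ℝ) - 4) * M = 2*(n':ℝ) - 1 := by
      rw [hQdef, hMdef]
      push_cast
      have hpos1 : (0:ℝ) < 2*(n':ℝ)+2 := by linarith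
      have hpos2 : (0:ℝ) < (2*(n':ℝ)+2) - 2 := by linarith
      have h1' : (2*(n':ℝ)+2) * ((2*(n':ℝ)+2) - 2) ≠ 0 := ne_of_gt (mul_pos hpos1 hpos2)
      have h2' : (2 * ((2*(n':ℝ)+2) - 4)) ≠ 0 := ne_of_gt (by linarith)
      have h3' : (n':ℝ) ≠ 0 := by positivity
      have h4' : (-2 + (n':ℝ)*2) ≠ 0 := by linarith
      have h5' : 2*(n':ℝ) - 2 ≠ 0 := by linarith
      have h6' : (n':ℝ) - 1 ≠ 0 := by linarith
      have h7' : 2*(n':ℝ) + 2 - 4 ≠ 0 := by linarith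
      have h8' : (n':ℝ) + 1 ≠ 0 := by linarith
      have h9' : (n':ℝ) + 1 - 1 ≠ 0 := by linarith
      have h10' : 2 * ((n':ℝ) + 1) - 4 ≠ 0 := by linarith
      field_simp
      ring
    linarith
  · -- odd case : n = 2 * n' + 3
    have hnk : n = 2 * n' + 3 := by rcases ho with ⟨m, hm⟩; omega
    subst hnk
    have hsum : ∑ i ∈ Ioc 1 n', (p (2*n'+3 - i + 1) + p (i+3) + x (i-1) + x i)
        ≤ ((n':ℝ) - 1) := by
      calc ∑ i ∈ Ioc 1 n', (p (2*n'+3 - i + 1) + p (i+3) + x (i-1) + x i)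
          ≤ ∑ i ∈ Ioc 1 n', (1:ℝ) := by
            apply Finset.sum_le_sum
            intro i hi'
            simp only [Finset.mem_Ioc] at hi'
            exact hi i (by omega) (by omega)
        _ = ((n':ℝ) - 1) := by
            rw [Finset.sum_const, Nat.card_Ioc, nsmul_eq_mul, mul_one, cast1]
    rw [Finset.sum_add_distrib, Finset.sum_add_distrib, Finset.sum_add_distrib] at hsum
    have hA : ∑ i ∈ Ioc 1 n', p (2*n'+3 - i + 1) = ∑ v ∈ Ioc (n'+3) (2*n'+2), p v := by
      rw [Finset.sum_congr rfl (fun i hi' => by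
        simp only [Finset.mem_Ioc] at hi'
        show p (2*n'+3 - i + 1) = p (2*n'+4 - i)
        congr 1; omega)]
      rw [sum_reflect' p 1 n' (2*n'+4) (by omega)]
      congr 1
      ext v
      simp only [Finset.mem_Ico, Finset.mem_Ioc]
      omega
    have hB : ∑ i ∈ Ioc 1 n', p (i+3) = ∑ v ∈ Ioc 4 (n'+3), p v := by
      rw [sum_shift3' p 1 n']
    have hC : ∑ i ∈ Ioc 1 n', x (i-1) = ∑ v ∈ Ioc 0 (n'-1), x v := by
      rw [sum_subone' x n']
    rw [hA, hB, hC] at hsum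
    have e0 : ∑ v ∈ Ioc 4 (2*n'+3), p v = ∑ v ∈ Ioc 4 (2*n'+2), p v + p (2*n'+3) := by
      rw [show 2*n'+3 = 2*n'+2+1 from rfl]
      exact Finset.sum_Ioc_succ_top (by omega) p
    have e1 : ∑ v ∈ Ioc 4 (2*n'+2), p v
        = ∑ v ∈ Ioc 4 (n'+3), p v + ∑ v ∈ Ioc (n'+3) (2*n'+2), p v :=
      (Finset.sum_Ioc_consecutive p (by omega) (by omega)).symm
    have hP : ∑ v ∈ Icc 4 (2*n'+3), p v
        = p 4 + (∑ v ∈ Ioc 4 (n'+3), p v + ∑ v ∈ Ioc (n'+3) (2*n'+2), p v)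
          + p (2*n'+3) := by
      rw [Finset.Icc_eq_cons_Ioc (by omega), Finset.sum_cons, e0, e1]
      ring
    have hx1 : M < x 1 := hcon 1 (by simp only [Finset.mem_Icc]; omega)
    have hCb : ((n':ℝ) - 1) * M ≤ ∑ v ∈ Ioc 0 (n'-1), x v := by
      calc ((n':ℝ) - 1) * M = ∑ _v ∈ Ioc 0 (n'-1), M := by
            rw [Finset.sum_const, Nat.card_Ioc, nsmul_eq_mul, Nat.sub_zero, cast1]
        _ ≤ ∑ v ∈ Ioc 0 (n'-1), x v := by
            apply Finset.sum_le_sum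
            intro i hi'
            simp only [Finset.mem_Ioc] at hi'
            exact (hcon i (by simp only [Finset.mem_Icc]; omega)).le
    have hDb : ((n':ℝ) - 1) * M ≤ ∑ v ∈ Ioc 1 n', x v := by
      calc ((n':ℝ) - 1) * M = ∑ _v ∈ Ioc 1 n', M := by
            rw [Finset.sum_const, Nat.card_Ioc, nsmul_eq_mul, cast1]
        _ ≤ ∑ v ∈ Ioc 1 n', x v := by
            apply Finset.sum_le_sum
            intro i hi'
            simp only [Finset.mem_Ioc] at hi'
            exact (hcon i (by simp only [Finset.mem_Icc]; omega)).le
    have hS : ((((2*n'+3 : ℕ)) : ℝ) ^ 2 - 4 * (((2*n'+3 : ℕ)) : ℝ) + 2) /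
        ((((2*n'+3 : ℕ)) : ℝ) * ((((2*n'+3 : ℕ)) : ℝ) - 2))
        ≤ p 2 + ∑ v ∈ Icc 4 (2*n'+3), p v := h0
    rw [hP] at hS
    push_cast at hS
    obtain ⟨Q, hQdef⟩ : ∃ q : ℝ, q = ((2*(n':ℝ)+3) ^ 2 - 4 * (2*(n':ℝ)+3) + 2) /
        ((2*(n':ℝ)+3) * (2*(n':ℝ)+3 - 2)) := ⟨_, rfl⟩
    rw [← hQdef] at hS
    have hEq : Q + (2*(n':ℝ) - 1) * M = (n':ℝ) := by
      rw [hQdef, hMdef]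
      push_cast
      have hpos1 : (0:ℝ) < 2*(n':ℝ)+3 := by linarith
      have hpos2 : (0:ℝ) < (2*(n':ℝ)+3) - 2 := by linarith
      have h1' : (2*(n':ℝ)+3) * ((2*(n':ℝ)+3) - 2) ≠ 0 := ne_of_gt (mul_pos hpos1 hpos2)
      have h2' : (2 * ((2*(n':ℝ)+3) - 4)) ≠ 0 := ne_of_gt (by linarith)
      have h4' : (-1 + (n':ℝ)*2) ≠ 0 := by linarith
      have h5' : 2*(n':ℝ) - 1 ≠ 0 := by linarith
      have h6' : 2*(n':ℝ) + 1 ≠ 0 := by linarith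
      have h7' : 2*(n':ℝ) + 3 - 4 ≠ 0 := by linarith
      field_simp
      ring
    linarith
end
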